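/- arXiv:1203.3749 — 4 statements merged into one kernel-verified Lean document; each statement's English description precedes it below -/
import Mathlib

section
/- Let π be a partition of {1,…,k} with q := #π ≤ k blocks. Then every π-consistent graph has at most k−q+1 connected components. -/
open Finset

section Defs

open scoped Classical

variable {k : ℕ}

/-- Two elements lie in the same block of the partition. -/
def InSameBlock (P : Finpartition (Finset.univ : Finset (Fin k))) (x y : Fin k) : Prop :=
  ∃ B ∈ P.parts, x ∈ B ∧ y ∈ B

/-- A partition of `{1,…,k}` is crossing if there are `a < b < c < d` with `a ∼ c`, `b ∼ d`
but `a` and `c` not in the same block as `b` and `d`. -/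
def IsCrossing (P : Finpartition (Finset.univ : Finset (Fin k))) : Prop :=
  ∃ a b c d : Fin k, a < b ∧ b < c ∧ c < d ∧
    InSameBlock P a c ∧ InSameBlock P b d ∧ ¬ InSameBlock P a b

/-- The closed block `B̄ = B ∪ {l : l - 1 ∈ B}` (indices cyclic). -/
def closedBlock [NeZero k] (B : Finset (Fin k)) : Finset (Fin k) :=
  B ∪ B.image (· + 1)

/-- The multiplicity `m_π(l)`: `2` if `l ∼_π l-1`, and `1` otherwise. -/
noncomputable def multPi [NeZero k] (P : Finpartition (Finset.univ : Finset (Fin k)))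
    (l : Fin k) : ℕ :=
  if InSameBlock P l (l - 1) then 2 else 1

/-- Number of endpoints of the edge `e` equal to `v`, counted with multiplicity
(a loop at `v` counts twice). -/
def endCount (v : Fin k) (e : Sym2 (Fin k)) : ℕ :=
  Sym2.lift ⟨fun a b => (if a = v then 1 else 0) + (if b = v then 1 else 0),
    fun _ _ => add_comm _ _⟩ e

/-- Degree of the vertex `v` in the multiset of edges `M`. -/
def degIn (v : Fin k) (M : Multiset (Sym2 (Fin k))) : ℕ :=
  (M.map (endCount v)).sum

/-- The simple graph underlying the multigraph with edge multiset `M`. -/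
def graphOf (M : Multiset (Sym2 (Fin k))) : SimpleGraph (Fin k) where
  Adj v w := v ≠ w ∧ s(v, w) ∈ M
  symm := by
    constructor
    intro v w h
    exact ⟨Ne.symm h.1, by rw [Sym2.eq_swap]; exact h.2⟩
  loopless := ⟨fun v h => h.1 rfl⟩

/-- Number of connected components of the multigraph with edge multiset `M`
(isolated vertices and vertices carrying only loops count as components). -/
noncomputable def numComponents (M : Multiset (Sym2 (Fin k))) : ℕ :=
  Nat.card (graphOf M).ConnectedComponent

/-- `M` together with the decomposition `F` is a `π`-consistent multigraph:
`M` has `k` edges; `M` is the disjoint union of the `F B`, `B` a block of `π`;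
the ends of every edge of `F B` lie in the closed block `B̄`; and in the submultigraph
`(B̄, F B)` every vertex `l ∈ B̄` has degree `m_π(l)`. -/
def IsConsistentDecomp [NeZero k] (P : Finpartition (Finset.univ : Finset (Fin k)))
    (M : Multiset (Sym2 (Fin k))) (F : Finset (Fin k) → Multiset (Sym2 (Fin k))) : Prop :=
  Multiset.card M = k ∧
  M = ∑ B ∈ P.parts, F B ∧
  (∀ B ∈ P.parts, ∀ e ∈ F B, ∀ v ∈ e, v ∈ closedBlock B) ∧
  (∀ B ∈ P.parts, ∀ v ∈ closedBlock B, degIn v (F B) = multPi P v)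

/-- A `π`-consistent multigraph. -/
def Consistent [NeZero k] (P : Finpartition (Finset.univ : Finset (Fin k)))
    (M : Multiset (Sym2 (Fin k))) : Prop :=
  ∃ F, IsConsistentDecomp P M F

end Defs

/-!
Let `c` be the number of components of `G`. Join each block `B` of `π` to each component of `G`
that contains an edge of `E^{(B)}`. This bipartite incidence graph on `q + c` vertices has at
most `k` edges, since each edge of `G` lies in a single component. It is connected: `l` lies in
the closed blocks of the blocks of `l - 1` and of `l`, and as `m_π(l) ≥ 1` both have an edge at
`l`, so consecutive blocks are linked through the component of `l`; every component contains
some vertex. Hence `q + c - 1 ≤ k`.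
-/

namespace SimpleGraph

section IncidenceGraph

variable {α β : Type*}

def incidenceGraph (r : α → β → Prop) : SimpleGraph (α ⊕ β) :=
  SimpleGraph.fromRel fun x y => ∃ a b, x = .inl a ∧ y = .inr b ∧ r a b

@[simp]
lemma incidenceGraph_adj_inl_inr {r : α → β → Prop} {a : α} {b : β} :
    (incidenceGraph r).Adj (.inl a) (.inr b) ↔ r a b := by
  simp [incidenceGraph]

lemma Connected.card_add_card_le [Fintype α] [Finite β] {r : α → β → Prop}
    (h : (incidenceGraph r).Connected) :
    Nat.card α + Nat.card β ≤ ∑ a, Nat.card {b // r a b} + 1 := by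
  have hsurj : Function.Surjective fun p : {p : α × β // r p.1 p.2} =>
      (⟨s(.inl p.1.1, .inr p.1.2), incidenceGraph_adj_inl_inr.mpr p.2⟩ :
        (incidenceGraph r).edgeSet) := by
    rintro ⟨e, he⟩
    induction e using Sym2.ind with
    | _ x y =>
      rw [mem_edgeSet, incidenceGraph, fromRel_adj] at he
      obtain ⟨-, ⟨a, b, rfl, rfl, hab⟩ | ⟨a, b, rfl, rfl, hab⟩⟩ := he
      · exact ⟨⟨(a, b), hab⟩, rfl⟩
      · exact ⟨⟨(a, b), hab⟩, Subtype.ext Sym2.eq_swap⟩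
  calc Nat.card α + Nat.card β = Nat.card (α ⊕ β) := Nat.card_sum.symm
    _ ≤ Nat.card (incidenceGraph r).edgeSet + 1 := h.card_vert_le_card_edgeSet_add_one
    _ ≤ Nat.card {p : α × β // r p.1 p.2} + 1 := by
      gcongr
      exact Nat.card_le_card_of_surjective _ hsurj
    _ = ∑ a, Nat.card {b // r a b} + 1 := by
      rw [Nat.card_congr (Equiv.subtypeProdEquivSigmaSubtype r), Nat.card_sigma]

end IncidenceGraph

variable {V : Type*} {G : SimpleGraph V}

lemma reachable_of_forall_reachable_add_one {n : ℕ} [NeZero n]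
    {f : Fin n → V} (h : ∀ i, G.Reachable (f i) (f (i + 1))) (i j : Fin n) :
    G.Reachable (f i) (f j) := by
  obtain ⟨m, rfl⟩ := Nat.exists_eq_succ_of_ne_zero (NeZero.ne n)
  suffices h0 : ∀ i, G.Reachable (f 0) (f i) from (h0 i).symm.trans (h0 j)
  intro i
  induction i using Fin.induction with
  | zero => rfl
  | succ i ih => exact ih.trans (Fin.coeSucc_eq_succ ▸ h i.castSucc)

end SimpleGraph

open SimpleGraph

section Multigraph

variable {k : ℕ}

lemma endCount_eq_zero {v : Fin k} {e : Sym2 (Fin k)} (h : v ∉ e) : endCount v e = 0 := by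
  induction e using Sym2.ind with
  | _ a b =>
    rw [Sym2.mem_iff, not_or] at h
    simp [endCount, Ne.symm h.1, Ne.symm h.2]

lemma exists_mem_of_degIn_ne_zero {v : Fin k} {N : Multiset (Sym2 (Fin k))}
    (h : degIn v N ≠ 0) : ∃ e ∈ N, v ∈ e := by
  contrapose! h
  exact Multiset.sum_eq_zero fun _ hx => by
    obtain ⟨e, he, rfl⟩ := Multiset.mem_map.mp hx
    exact endCount_eq_zero (h e he)

lemma graphOf_reachable_of_mem {M : Multiset (Sym2 (Fin k))} {e : Sym2 (Fin k)} (he : e ∈ M)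
    {v w : Fin k} (hv : v ∈ e) (hw : w ∈ e) : (graphOf M).Reachable v w := by
  by_cases hvw : v = w
  · exact hvw ▸ Reachable.rfl
  · rw [(Sym2.mem_and_mem_iff hvw).mp ⟨hv, hw⟩] at he
    exact Adj.reachable ⟨hvw, he⟩

def MeetsComponent (M N : Multiset (Sym2 (Fin k))) (C : (graphOf M).ConnectedComponent) : Prop :=
  ∃ e ∈ N, ∃ v ∈ e, (graphOf M).connectedComponentMk v = C

lemma card_meetsComponent_le {M N : Multiset (Sym2 (Fin k))} (hNM : N ≤ M) :
    Nat.card {C // MeetsComponent M N C} ≤ Multiset.card N := by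
  classical
  have hsub : {C | MeetsComponent M N C} ⊆
      ↑(N.toFinset.image fun e => (graphOf M).connectedComponentMk e.out.1) := by
    rintro _ ⟨e, he, v, hv, rfl⟩
    simp only [Finset.mem_coe, Finset.mem_image, Multiset.mem_toFinset]
    exact ⟨e, he, ConnectedComponent.sound
      (graphOf_reachable_of_mem (Multiset.mem_of_le hNM he) (Sym2.out_fst_mem e) hv)⟩
  calc Nat.card {C // MeetsComponent M N C} = Set.ncard {C | MeetsComponent M N C} :=
        (Nat.card_coe_set_eq _)
    _ ≤ _ := Set.ncard_le_ncard hsub (Finset.finite_toSet _)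
    _ ≤ N.toFinset.card := by rw [Set.ncard_coe_finset]; exact Finset.card_image_le
    _ ≤ Multiset.card N := Multiset.toFinset_card_le N

end Multigraph

section Consistent

variable {k : ℕ} [NeZero k] {P : Finpartition (Finset.univ : Finset (Fin k))}
  {M : Multiset (Sym2 (Fin k))} {F : Finset (Fin k) → Multiset (Sym2 (Fin k))}

lemma multPi_ne_zero (l : Fin k) : multPi P l ≠ 0 := by
  unfold multPi
  split_ifs <;> norm_num

namespace IsConsistentDecomp

lemma le_of_mem_parts (hF : IsConsistentDecomp P M F) {B : Finset (Fin k)} (hB : B ∈ P.parts) :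
    F B ≤ M :=
  hF.2.1 ▸ Finset.single_le_sum (fun _ _ => Multiset.zero_le _) hB

lemma meetsComponent_of_mem_closedBlock (hF : IsConsistentDecomp P M F) {B : Finset (Fin k)}
    (hB : B ∈ P.parts) {l : Fin k} (hl : l ∈ closedBlock B) :
    MeetsComponent M (F B) ((graphOf M).connectedComponentMk l) := by
  obtain ⟨e, he, hle⟩ := exists_mem_of_degIn_ne_zero (hF.2.2.2 B hB l hl ▸ multPi_ne_zero l)
  exact ⟨e, he, l, hle, rfl⟩

lemma incidenceGraph_connected (hF : IsConsistentDecomp P M F) :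
    (incidenceGraph fun (B : P.parts) => MeetsComponent M (F B)).Connected := by
  set G := incidenceGraph fun (B : P.parts) => MeetsComponent M (F B)
  let blockOf : Fin k → P.parts := fun l => ⟨P.part l, P.part_mem.mpr (Finset.mem_univ l)⟩
  have hmem (l : Fin k) : l ∈ P.part l := P.mem_part (Finset.mem_univ l)
  have hadj (l : Fin k) : G.Adj (.inl (blockOf l)) (.inr ((graphOf M).connectedComponentMk l)) :=
    incidenceGraph_adj_inl_inr.mpr <|
      hF.meetsComponent_of_mem_closedBlock (blockOf l).2 (Finset.mem_union_left _ (hmem l))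
  have hadj_add_one (l : Fin k) :
      G.Adj (.inl (blockOf l)) (.inr ((graphOf M).connectedComponentMk (l + 1))) :=
    incidenceGraph_adj_inl_inr.mpr <| hF.meetsComponent_of_mem_closedBlock (blockOf l).2
      (Finset.mem_union_right _ (Finset.mem_image_of_mem _ (hmem l)))
  have hblocks : ∀ l l', G.Reachable (.inl (blockOf l)) (.inl (blockOf l')) :=
    reachable_of_forall_reachable_add_one fun l =>
      (hadj_add_one l).reachable.trans (hadj (l + 1)).reachable.symm
  refine (connected_iff_exists_forall_reachable G).mpr ⟨.inl (blockOf 0), ?_⟩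
  rintro (⟨B, hB⟩ | C)
  · obtain ⟨l, hl⟩ := P.nonempty_of_mem_parts hB
    have hblock : blockOf l = ⟨B, hB⟩ := Subtype.ext (P.part_eq_of_mem hB hl)
    exact hblock ▸ hblocks 0 l
  · obtain ⟨l, rfl⟩ := C.exists_rep
    exact (hblocks 0 l).trans (hadj l).reachable

lemma sum_card_meetsComponent_le (hF : IsConsistentDecomp P M F) :
    ∑ B : P.parts, Nat.card {C // MeetsComponent M (F B) C} ≤ k :=
  calc ∑ B : P.parts, Nat.card {C // MeetsComponent M (F B) C}
      ≤ ∑ B : P.parts, Multiset.card (F B) :=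
        Finset.sum_le_sum fun B _ => card_meetsComponent_le (hF.le_of_mem_parts B.2)
    _ = Multiset.card (∑ B ∈ P.parts, F B) := by
        rw [Multiset.card_sum, Finset.sum_coe_sort P.parts fun B => Multiset.card (F B)]
    _ = k := by rw [← hF.2.1, hF.1]

end IsConsistentDecomp

end Consistent

/-- **Lemma (maximal number of components).**
Let `π` be a partition of `{1,…,k}` with `q = #π ≤ k` blocks. Then every `π`-consistent
multigraph has at most `k - q + 1` connected components. -/
theorem consistent_graph_components_le (k : ℕ) [NeZero k]
    (P : Finpartition (Finset.univ : Finset (Fin k)))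
    (M : Multiset (Sym2 (Fin k))) (hM : Consistent P M) :
    numComponents M ≤ k - P.parts.card + 1 := by
  obtain ⟨F, hF⟩ := hM
  have hcount := hF.incidenceGraph_connected.card_add_card_le
  have hedges := hF.sum_card_meetsComponent_le
  rw [Nat.card_eq_fintype_card, Fintype.card_coe] at hcount
  unfold numComponents
  omega
end

section
/- Let {a(i): i∈ℕ} be a stationary process on a finite state space with E[a(1)]=0 satisfying the mixing estimate (3.2), and set t(i,i') := E[a(i)·a(i')]. Then there exists a constant C' (depending only on C, α and k) such that for every k∈ℕ and all i_1≤…≤i_{2k} in ℕ: E[a(i_1)·…·a(i_{2k})] = ∏_{l=1}^{k} t(i_{2l−1},i_{2l}) + R(i_1,…,i_{2k}), where |R(i_1,…,i_{2k})| ≤ C'·Σ_{l=1}^{k−1} α^{i_{2l+1}−i_{2l}}. -/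
open MeasureTheory ProbabilityTheory Finset

/-- The event that the process `a` takes the values `s t` at the times `i t` for all `t` in a
given set of positions. -/
def valueEvent {Ω : Type} [MeasureSpace Ω] {k : ℕ} (a : ℕ → Ω → ℝ) (i : Fin k → ℕ)
    (s : Fin k → ℝ) (pos : Finset (Fin k)) : Set Ω :=
  {ω | ∀ t ∈ pos, a (i t) ω = s t}

/-- The mixing estimate (3.2): for all `k`, every split point `l` with `0 < l`, all monotone
time tuples `i_1 ≤ … ≤ i_k` and all states, the conditional probability of the future values
given the past values differs from the unconditional probability by at most
`C·α^{i_l - i_{l-1}}`, whenever the conditioning event has positive probability. -/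
def MixingEstimate {Ω : Type} [MeasureSpace Ω] (a : ℕ → Ω → ℝ) (C α : ℝ) : Prop :=
  ∀ (k : ℕ) (i : Fin k → ℕ), Monotone i → ∀ (s : Fin k → ℝ) (l : Fin k), 0 < l.val →
    volume (valueEvent a i s (univ.filter (fun t => t < l))) ≠ 0 →
    |(volume (valueEvent a i s (univ.filter (fun t => l ≤ t)) ∩
          valueEvent a i s (univ.filter (fun t => t < l)))).toReal /
        (volume (valueEvent a i s (univ.filter (fun t => t < l)))).toReal -
      (volume (valueEvent a i s (univ.filter (fun t => l ≤ t)))).toReal|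
      ≤ C * α ^ (i l - i ⟨l.val - 1, by omega⟩)

/-!
Expanding a product of `S`-valued variables over the finitely many joint values turns
`E[∏ a(i_t)]` into a sum of probabilities of cylinder events. Doing the same under `μ ⊗ μ`,
with the past read off the first factor and the future off the second, gives
`E[past] · E[future]`; the mixing estimate compares the two cylinder probabilities term by term,
so the covariance across a split is `O(α^gap)`. Splitting off the last pair `a(i_{2k+1}) a(i_{2k+2})`
and inducting on `k` accumulates one such error per pair.
-/

theorem prod_filter_lt_fin_eq_prod_range {M : Type*} [CommMonoid M] {n : ℕ} (l : Fin n)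
    (f : ℕ → M) : ∏ t ∈ univ.filter (· < l), f t = ∏ r ∈ range l, f r := by
  rw [filter_gt_eq_Iio, ← Nat.Iio_eq_range, ← Fin.map_valEmbedding_Iio, prod_map]
  rfl

theorem prod_filter_ge_fin_eq_prod_Ico {M : Type*} [CommMonoid M] {n : ℕ} (l : Fin n)
    (f : ℕ → M) : ∏ t ∈ univ.filter (l ≤ ·), f t = ∏ r ∈ Ico (l : ℕ) n, f r := by
  rw [filter_le_eq_Ici, ← Fin.map_valEmbedding_Ici, prod_map]
  rfl

theorem integral_comp_eq_sum_of_forall_mem {W E F : Type*} [MeasurableSpace W]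
    [MeasurableSpace E] [MeasurableSingletonClass E] [NormedAddCommGroup F] [NormedSpace ℝ F]
    [CompleteSpace F] (μ : Measure W) [IsFiniteMeasure μ] {X : W → E} (hX : Measurable X)
    {T : Finset E} (hT : ∀ ω, X ω ∈ T) (f : E → F) :
    ∫ ω, f (X ω) ∂μ = ∑ x ∈ T, μ.real (X ⁻¹' {x}) • f x := by
  have hfX : (fun ω => f (X ω)) = fun ω => ∑ x ∈ T, (X ⁻¹' {x}).indicator (fun _ => f x) ω := by
    funext ω
    rw [sum_eq_single_of_mem (X ω) (hT ω) fun x _ hx => by simp [Ne.symm hx]]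
    simp
  have hmeas (x : E) : MeasurableSet (X ⁻¹' {x}) := hX (measurableSet_singleton x)
  rw [hfX, integral_finsetSum _ fun x _ => (integrable_const _).indicator (hmeas x)]
  exact sum_congr rfl fun x _ => integral_indicator_const _ (hmeas x)

theorem abs_measureReal_inter_sub_mul_le {W : Type*} [MeasurableSpace W] {μ : Measure W}
    [IsFiniteMeasure μ] {P F : Set W} {c : ℝ}
    (h : μ P ≠ 0 → |μ.real (F ∩ P) / μ.real P - μ.real F| ≤ c) :
    |μ.real (F ∩ P) - μ.real P * μ.real F| ≤ c * μ.real P := by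
  by_cases hP : μ P = 0
  · simp [measureReal_def, hP, measure_mono_null Set.inter_subset_right hP]
  · have hpos : 0 < μ.real P := ENNReal.toReal_pos hP (measure_ne_top μ P)
    calc |μ.real (F ∩ P) - μ.real P * μ.real F|
        = μ.real P * |μ.real (F ∩ P) / μ.real P - μ.real F| := by
          rw [← abs_of_pos hpos, ← abs_mul, abs_of_pos hpos, mul_sub, mul_div_cancel₀ _ hpos.ne']
      _ ≤ c * μ.real P := by rw [mul_comm c]; exact mul_le_mul_of_nonneg_left (h hP) hpos.le

theorem integral_prod_filter_lt_mul_integral_prod_filter_ge {W ι : Type*} [MeasurableSpace W]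
    (μ : Measure W) [SFinite μ] [Fintype ι] [LinearOrder ι] (f : ι → W → ℝ) (l : ι) :
    (∫ ω, ∏ t ∈ univ.filter (· < l), f t ω ∂μ) * (∫ ω, ∏ t ∈ univ.filter (l ≤ ·), f t ω ∂μ) =
      ∫ p, ∏ t, (if t < l then f t p.1 else f t p.2) ∂(μ.prod μ) := by
  simp_rw [prod_ite, not_lt]
  exact (integral_prod_mul _ _).symm

theorem abs_prod_le_pow_of_mem_piFinset {S : Finset ℝ} {M : ℝ} (hM : ∀ x ∈ S, |x| ≤ M)
    {n : ℕ} {s : Fin n → ℝ} (hs : s ∈ Fintype.piFinset fun _ => S) : |∏ t, s t| ≤ M ^ n := by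
  rw [abs_prod]
  calc ∏ t, |s t| ≤ ∏ _t : Fin n, M :=
        prod_le_prod (fun t _ => abs_nonneg (s t)) fun t _ => hM (s t) (Fintype.mem_piFinset.1 hs t)
    _ = M ^ n := by simp

theorem abs_integral_mul_le_sq {W : Type*} [MeasurableSpace W] {μ : Measure W}
    [IsProbabilityMeasure μ] {f g : W → ℝ} {M : ℝ} (hf : ∀ ω, |f ω| ≤ M) (hg : ∀ ω, |g ω| ≤ M) :
    |∫ ω, f ω * g ω ∂μ| ≤ M ^ 2 := by
  have h := norm_integral_le_of_norm_le_const (μ := μ) (f := fun ω => f ω * g ω) (C := M * M)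
    (ae_of_all _ fun ω => by
      rw [Real.norm_eq_abs, abs_mul]
      exact mul_le_mul (hf ω) (hg ω) (abs_nonneg _) ((abs_nonneg _).trans (hf ω)))
  simpa [sq] using h

theorem MixingEstimate.abs_integral_prod_sub_mul_le {Ω : Type} [MeasureSpace Ω]
    [IsProbabilityMeasure (volume : Measure Ω)] {S : Finset ℝ} {a : ℕ → Ω → ℝ}
    (hmeas : ∀ i, Measurable (a i)) (hvals : ∀ i ω, a i ω ∈ S) {C α : ℝ} (hC : 0 ≤ C)
    (hα0 : 0 ≤ α) (hmix : MixingEstimate a C α) {M : ℝ} (hM : ∀ x ∈ S, |x| ≤ M)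
    {n : ℕ} {i : Fin n → ℕ} (hi : Monotone i) {l : Fin n} (hl : 0 < l.val) :
    |(∫ ω, ∏ t, a (i t) ω) -
        (∫ ω, ∏ t ∈ univ.filter (· < l), a (i t) ω) * ∫ ω, ∏ t ∈ univ.filter (l ≤ ·), a (i t) ω|
      ≤ C * M ^ n * S.card ^ n * α ^ (i l - i ⟨l.val - 1, by omega⟩) := by
  set μ : Measure Ω := volume
  set δ := C * α ^ (i l - i ⟨l.val - 1, by omega⟩)
  set past := fun s => valueEvent a i s (univ.filter (· < l))
  set future := fun s => valueEvent a i s (univ.filter (l ≤ ·))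
  set T := Fintype.piFinset fun _ : Fin n => S
  let X : Ω → Fin n → ℝ := fun ω t => a (i t) ω
  let Y : Ω × Ω → Fin n → ℝ := fun p t => if t < l then a (i t) p.1 else a (i t) p.2
  have hX (s : Fin n → ℝ) : X ⁻¹' {s} = future s ∩ past s := by
    ext ω
    simp only [X, past, future, valueEvent, Set.mem_preimage, Set.mem_singleton_iff, funext_iff,
      Set.mem_inter_iff, Set.mem_ofPred_eq, mem_filter, mem_univ, true_and]
    exact ⟨fun h => ⟨fun t _ => h t, fun t _ => h t⟩,
      fun h t => (le_or_gt l t).elim (h.1 t) (h.2 t)⟩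
  have hY (s : Fin n → ℝ) : Y ⁻¹' {s} = past s ×ˢ future s := by
    ext p
    simp only [Y, past, future, valueEvent, Set.mem_preimage, Set.mem_singleton_iff, funext_iff,
      Set.mem_prod, Set.mem_ofPred_eq, mem_filter, mem_univ, true_and]
    refine ⟨fun h => ⟨fun t ht => ?_, fun t ht => ?_⟩, fun h t => ?_⟩
    · simpa [ht] using h t
    · simpa [not_lt.2 ht] using h t
    · split_ifs with ht
      exacts [h.1 t ht, h.2 t (not_lt.1 ht)]
  have hterm (s : Fin n → ℝ) : |μ.real (X ⁻¹' {s}) - (μ.prod μ).real (Y ⁻¹' {s})| ≤ δ := by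
    rw [hX, hY, measureReal_prod_prod]
    calc _ ≤ δ * μ.real (past s) := abs_measureReal_inter_sub_mul_le (hmix n i hi s l hl)
      _ ≤ δ := mul_le_of_le_one_right (by positivity) measureReal_le_one
  have hXmeas : Measurable X := measurable_pi_lambda _ fun t => hmeas (i t)
  have hYmeas : Measurable Y := measurable_pi_lambda _ fun t => by
    dsimp only [Y]
    split_ifs
    exacts [(hmeas (i t)).comp measurable_fst, (hmeas (i t)).comp measurable_snd]
  have hXint : ∫ ω, ∏ t, a (i t) ω = ∑ s ∈ T, μ.real (X ⁻¹' {s}) * ∏ t, s t :=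
    integral_comp_eq_sum_of_forall_mem μ hXmeas
      (fun ω => Fintype.mem_piFinset.2 fun t => hvals _ ω) fun s => ∏ t, s t
  have hYint : ∫ p, ∏ t, Y p t ∂(μ.prod μ) = ∑ s ∈ T, (μ.prod μ).real (Y ⁻¹' {s}) * ∏ t, s t :=
    integral_comp_eq_sum_of_forall_mem (μ.prod μ) hYmeas
      (fun p => Fintype.mem_piFinset.2 fun t => by dsimp only [Y]; split_ifs <;> exact hvals _ _)
      fun s => ∏ t, s t
  rw [integral_prod_filter_lt_mul_integral_prod_filter_ge, hXint, hYint, ← sum_sub_distrib]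
  calc _ ≤ ∑ s ∈ T, |μ.real (X ⁻¹' {s}) - (μ.prod μ).real (Y ⁻¹' {s})| * |∏ t, s t| :=
        (abs_sum_le_sum_abs _ _).trans_eq (sum_congr rfl fun s _ => by rw [← sub_mul, abs_mul])
    _ ≤ ∑ s ∈ T, δ * M ^ n := sum_le_sum fun s hs =>
        mul_le_mul (hterm s) (abs_prod_le_pow_of_mem_piFinset hM hs) (abs_nonneg _)
          (by positivity)
    _ = C * M ^ n * S.card ^ n * α ^ (i l - i ⟨l.val - 1, by omega⟩) := by
        simp only [T, δ, sum_const, Fintype.card_piFinset, prod_const, card_univ,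
          Fintype.card_fin, nsmul_eq_mul, Nat.cast_pow]
        ring

theorem MixingEstimate.abs_integral_prod_range_sub_mul_le {Ω : Type} [MeasureSpace Ω]
    [IsProbabilityMeasure (volume : Measure Ω)] {S : Finset ℝ} {a : ℕ → Ω → ℝ}
    (hmeas : ∀ i, Measurable (a i)) (hvals : ∀ i ω, a i ω ∈ S) {C α : ℝ} (hC : 0 ≤ C)
    (hα0 : 0 ≤ α) (hmix : MixingEstimate a C α) {M : ℝ} (hM : ∀ x ∈ S, |x| ≤ M)
    {i : ℕ → ℕ} (hi : Monotone i) {m n : ℕ} (hm : 0 < m) (hmn : m < n) :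
    |(∫ ω, ∏ r ∈ range n, a (i r) ω) -
        (∫ ω, ∏ r ∈ range m, a (i r) ω) * ∫ ω, ∏ r ∈ Ico m n, a (i r) ω|
      ≤ C * M ^ n * S.card ^ n * α ^ (i m - i (m - 1)) := by
  have h := hmix.abs_integral_prod_sub_mul_le hmeas hvals hC hα0 hM
    (i := fun t : Fin n => i t) (fun _ _ h => hi h) (l := ⟨m, hmn⟩) hm
  have hall (ω : Ω) := Fin.prod_univ_eq_prod_range (fun r => a (i r) ω) n
  have hpast (ω : Ω) := prod_filter_lt_fin_eq_prod_range ⟨m, hmn⟩ fun r => a (i r) ω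
  have hfuture (ω : Ω) := prod_filter_ge_fin_eq_prod_Ico ⟨m, hmn⟩ fun r => a (i r) ω
  simpa only [hall, hpast, hfuture] using h

theorem MixingEstimate.exists_abs_integral_prod_range_sub_prod_le {Ω : Type} [MeasureSpace Ω]
    [IsProbabilityMeasure (volume : Measure Ω)] {S : Finset ℝ} {a : ℕ → Ω → ℝ}
    (hmeas : ∀ i, Measurable (a i)) (hvals : ∀ i ω, a i ω ∈ S) {C α : ℝ} (hC : 0 ≤ C)
    (hα0 : 0 ≤ α) (hmix : MixingEstimate a C α) {M : ℝ} (hM0 : 0 ≤ M) (hM : ∀ x ∈ S, |x| ≤ M)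
    {k : ℕ} (hk : 1 ≤ k) :
    ∃ C' : ℝ, 0 ≤ C' ∧ ∀ i : ℕ → ℕ, Monotone i →
      |(∫ ω, ∏ r ∈ range (2 * k), a (i r) ω) -
          ∏ l ∈ range k, ∫ ω, a (i (2 * l)) ω * a (i (2 * l + 1)) ω|
        ≤ C' * ∑ l ∈ range k, if 0 < l then α ^ (i (2 * l) - i (2 * l - 1)) else 0 := by
  induction k, hk using Nat.le_induction with
  | base => exact ⟨0, le_rfl, fun i _ => by simp [prod_range_succ]⟩
  | succ k hk ih =>
    obtain ⟨C', hC'0, hC'⟩ := ih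
    set D := C * M ^ (2 * k + 2) * S.card ^ (2 * k + 2)
    refine ⟨D + M ^ 2 * C', by positivity, fun i hi => ?_⟩
    rw [show 2 * (k + 1) = 2 * k + 2 by ring, prod_range_succ, sum_range_succ,
      if_pos (show 0 < k from hk)]
    set E := ∫ ω, ∏ r ∈ range (2 * k + 2), a (i r) ω
    set X := ∫ ω, ∏ r ∈ range (2 * k), a (i r) ω
    set T := ∫ ω, a (i (2 * k)) ω * a (i (2 * k + 1)) ω
    set P := ∏ l ∈ range k, ∫ ω, a (i (2 * l)) ω * a (i (2 * l + 1)) ω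
    set B := ∑ l ∈ range k, if 0 < l then α ^ (i (2 * l) - i (2 * l - 1)) else 0
    set G := α ^ (i (2 * k) - i (2 * k - 1))
    have hpair (ω : Ω) : ∏ r ∈ Ico (2 * k) (2 * k + 2), a (i r) ω =
        a (i (2 * k)) ω * a (i (2 * k + 1)) ω := by
      simp [prod_Ico_eq_prod_range, prod_range_succ]
    have hsplit : |E - X * T| ≤ D * G := by
      simpa only [hpair] using hmix.abs_integral_prod_range_sub_mul_le hmeas hvals hC hα0 hM hi
        (m := 2 * k) (n := 2 * k + 2) (by omega) (by omega)
    have hT : |T| ≤ M ^ 2 :=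
      abs_integral_mul_le_sq (fun ω => hM _ (hvals _ ω)) (fun ω => hM _ (hvals _ ω))
    have hB : 0 ≤ B := sum_nonneg fun l _ => by split_ifs <;> positivity
    calc |E - P * T| = |(E - X * T) + T * (X - P)| := by congr 1; ring
      _ ≤ |E - X * T| + |T| * |X - P| := (abs_add_le _ _).trans_eq (by rw [abs_mul])
      _ ≤ D * G + M ^ 2 * (C' * B) :=
          add_le_add hsplit (mul_le_mul hT (hC' i hi) (abs_nonneg _) (sq_nonneg M))
      _ ≤ (D + M ^ 2 * C') * (B + G) := by
          nlinarith [mul_nonneg (by positivity : 0 ≤ D) hB,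
            mul_nonneg (mul_nonneg (sq_nonneg M) hC'0) (by positivity : 0 ≤ G)]

/-- **Pairing expansion of even mixed moments (condition (A1)).** Let `{a(i)}` be a stationary
process with values in a finite state space `S ⊆ ℝ`, `E[a(0)] = 0`, satisfying the mixing
estimate (3.2), and let `t(i,i') = E[a(i)·a(i')]`. Then for every `k ≥ 1` there is a constant
`C' ≥ 0` (depending only on `C`, `α` and `k`) such that for all `i_1 ≤ … ≤ i_{2k}`:
`E[a(i_1)⋯a(i_{2k})] = ∏_{l=1}^{k} t(i_{2l-1}, i_{2l}) + R(i_1,…,i_{2k})` with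
`|R(i_1,…,i_{2k})| ≤ C'·Σ_{l=1}^{k-1} α^{i_{2l+1} - i_{2l}}`. -/
theorem even_moment_pairing_expansion
    {Ω : Type} [MeasureSpace Ω] [IsProbabilityMeasure (volume : Measure Ω)]
    (S : Finset ℝ)
    (a : ℕ → Ω → ℝ) (hmeas : ∀ i, Measurable (a i))
    (hvals : ∀ i ω, a i ω ∈ S)
    (C α : ℝ) (hC : 0 < C) (hα0 : 0 ≤ α)
    (hmix : MixingEstimate a C α)
    (t : ℕ → ℕ → ℝ) (ht : ∀ i i', t i i' = ∫ ω, a i ω * a i' ω)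
    (k : ℕ) (hk : 1 ≤ k) :
    ∃ C' : ℝ, 0 ≤ C' ∧
      ∀ i : Fin (2 * k) → ℕ, Monotone i →
        |(∫ ω, ∏ r : Fin (2 * k), a (i r) ω)
            - ∏ l : Fin k, t (i ⟨2 * l.val, by omega⟩) (i ⟨2 * l.val + 1, by omega⟩)|
          ≤ C' * ∑ l : Fin k,
              (if 0 < l.val then
                α ^ (i ⟨2 * l.val, by omega⟩ - i ⟨2 * l.val - 1, by omega⟩)
              else 0) := by
  have hM (x : ℝ) (hx : x ∈ S) : |x| ≤ ∑ y ∈ S, |y| := single_le_sum (fun y _ => abs_nonneg y) hx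
  obtain ⟨C', hC'0, hC'⟩ := hmix.exists_abs_integral_prod_range_sub_prod_le hmeas hvals hC.le hα0
    (sum_nonneg fun y _ => abs_nonneg y) hM hk
  refine ⟨C', hC'0, fun i hi => ?_⟩
  set j : ℕ → ℕ := fun r => i ⟨min r (2 * k - 1), by omega⟩
  have hj : Monotone j := fun r r' h => hi (Fin.mk_le_mk.2 (by omega))
  have hij (r : Fin (2 * k)) : i r = j r := congrArg i (Fin.ext (by simp; omega))
  have e1 (ω : Ω) := Fin.prod_univ_eq_prod_range (fun r => a (j r) ω) (2 * k)
  have e2 := Fin.prod_univ_eq_prod_range (fun l => ∫ ω, a (j (2 * l)) ω * a (j (2 * l + 1)) ω) k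
  have e3 := Fin.sum_univ_eq_sum_range
    (fun l => if 0 < l then α ^ (j (2 * l) - j (2 * l - 1)) else 0) k
  simp only [hij, ht, e1, e2, e3]
  exact hC' j hj
end

section
/- Let {a(i,j): i∈ℕ}, j∈ℕ, be independent, identically distributed copies of a real-valued stationary sequence with finite moments of all orders, let X_n=(a(i,j))_{1≤i≤m,1≤j≤n} and W_n=(1/n)X_nX_nᵀ. Then for every k∈ℕ, (1/m)·E[tr(W_n^k)] = (1/(m·n^k)) · Σ_{π∈P(k)} n·(n−1)·…·(n−#π+1) · Σ_{i_1,…,i_k=1}^{m} ∏_{s=1}^{#π} E[ ∏_{l∈B^{(s)}_π} a(i_l,1)·a(i_{l+1},1) ], where P(k) is the set of all partitions of {1,…,k}, B^{(1)}_π,…,B^{(#π)}_π are the blocks of π, and i_{k+1} is identified with i_1. -/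
open MeasureTheory ProbabilityTheory Filter Finset

/-!
Expanding `tr (X Xᵀ)^k` writes the expected trace as a sum, over row indices `i` and column
indices `c : Fin k → Fin n`, of `E ∏ₗ a(iₗ, cₗ) a(iₗ₊₁, cₗ)`. A column assignment `c` is the same
as a partition `π` of `Fin k` (the level sets of `c`) together with an injective labelling of its
blocks by columns, and there are `n (n-1) ⋯ (n-#π+1)` such labellings. The factors belonging to
different blocks involve different columns, which are independent with the law of column `0`, so
the expectation splits into a product over the blocks that depends on `π` only.
-/

namespace Matrix

variable {m p R : Type*} [Fintype m] [DecidableEq m] [CommSemiring R]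

theorem pow_succ_apply_eq_sum_prod (M : Matrix m m R) (k : ℕ) (x y : m) :
    (M ^ (k + 1)) x y = ∑ j : Fin k → m,
      let v : Fin (k + 1) → m := Fin.cons x j
      (∏ l : Fin k, M (v l.castSucc) (v l.succ)) * M (v (Fin.last k)) y := by
  induction k generalizing x with
  | zero => simp
  | succ k ih =>
    rw [pow_succ', mul_apply, ← (Fin.consEquiv fun _ => m).sum_comp, Fintype.sum_prod_type]
    simp only [ih, mul_sum, Fin.prod_univ_succ, ← Fin.succ_last]
    simp [mul_assoc]

theorem trace_pow_eq_sum_prod (M : Matrix m m R) (k : ℕ) [NeZero k] :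
    (M ^ k).trace = ∑ j : Fin k → m, ∏ l : Fin k, M (j l) (j (l + 1)) := by
  obtain ⟨k, rfl⟩ := Nat.exists_eq_succ_of_ne_zero (NeZero.ne k)
  rw [trace, ← (Fin.consEquiv fun _ => m).sum_comp, Fintype.sum_prod_type]
  refine sum_congr rfl fun x _ => ?_
  simp only [diag_apply, pow_succ_apply_eq_sum_prod, Fin.consEquiv_apply, Fin.prod_univ_castSucc,
    Fin.coeSucc_eq_succ, Fin.last_add_one, Fin.cons_zero]

theorem trace_mul_transpose_pow_eq_sum [Fintype p] (X : Matrix m p R) (k : ℕ) [NeZero k] :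
    ((X * Xᵀ) ^ k).trace
      = ∑ i : Fin k → m, ∑ c : Fin k → p, ∏ l, X (i l) (c l) * X (i (l + 1)) (c l) := by
  simp [trace_pow_eq_sum_prod, mul_apply, Fintype.prod_sum]

end Matrix

namespace Finpartition

variable {α β : Type*} [Fintype α] [DecidableEq α]

def coloring (P : Finpartition (univ : Finset α)) (g : P.parts ↪ β) (x : α) : β :=
  g ⟨P.part x, P.part_mem.2 (mem_univ x)⟩

theorem exists_part_eq (P : Finpartition (univ : Finset α)) {B : Finset α} (hB : B ∈ P.parts) :
    ∃ x, P.part x = B :=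
  (P.part_surjOn hB).imp fun _ hx => hx.2

theorem eq_of_forall_part_eq {P Q : Finpartition (univ : Finset α)}
    (h : ∀ x, P.part x = Q.part x) : P = Q := by
  have mem_parts : ∀ (R : Finpartition (univ : Finset α)) t, t ∈ R.parts ↔ ∃ x, R.part x = t :=
    fun R t => ⟨R.exists_part_eq, by rintro ⟨x, rfl⟩; simp⟩
  ext t
  simp [mem_parts, h]

theorem mem_part_ofSetoid_ker_iff {f : α → β} [DecidableRel (Setoid.ker f).r] {x y : α} :
    y ∈ (ofSetoid (Setoid.ker f)).part x ↔ f x = f y :=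
  mem_part_ofSetoid_iff_rel

theorem ofSetoid_ker_coloring (P : Finpartition (univ : Finset α)) (g : P.parts ↪ β)
    [DecidableRel (Setoid.ker (P.coloring g)).r] :
    ofSetoid (Setoid.ker (P.coloring g)) = P := by
  refine eq_of_forall_part_eq fun x => Finset.ext fun y => ?_
  rw [mem_part_ofSetoid_ker_iff, coloring, coloring, g.injective.eq_iff, Subtype.mk.injEq,
    P.mem_part_iff_part_eq_part (mem_univ y) (mem_univ x), eq_comm]

theorem coloring_bijective :
    Function.Bijective fun p : Σ P : Finpartition (univ : Finset α), P.parts ↪ β =>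
      p.1.coloring p.2 := by
  classical
  constructor
  · rintro ⟨P, g⟩ ⟨Q, h⟩ hgh
    simp only at hgh
    obtain rfl : P = Q := by
      rw [← ofSetoid_ker_coloring P g, ← ofSetoid_ker_coloring Q h]
      simp_rw [hgh]
    congr
    ext ⟨B, hB⟩
    obtain ⟨x, rfl⟩ := P.exists_part_eq hB
    exact congrFun hgh x
  · intro f
    set P := ofSetoid (Setoid.ker f)
    choose r hr using fun B : P.parts => P.exists_part_eq B.2
    refine ⟨⟨P, ⟨fun B => f (r B), fun B B' hBB' => ?_⟩⟩, funext fun x => ?_⟩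
    · rw [Subtype.ext_iff, ← hr, ← hr, eq_comm,
        ← P.mem_part_iff_part_eq_part (mem_univ _) (mem_univ _)]
      exact mem_part_ofSetoid_ker_iff (f := f).2 hBB'
    · refine (mem_part_ofSetoid_ker_iff (f := f).1 ?_).symm
      exact (P.mem_part_iff_part_eq_part (mem_univ _) (mem_univ _)).2 (hr _)

theorem sum_fun_eq_sum_descFactorial_smul {M : Type*} [AddCommMonoid M] [Fintype β]
    (F : (α → β) → M) (G : Finpartition (univ : Finset α) → M)
    (hFG : ∀ P g, F (P.coloring g) = G P) :
    ∑ f, F f = ∑ P, (Fintype.card β).descFactorial #P.parts • G P := by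
  rw [← coloring_bijective.sum_comp, Fintype.sum_sigma]
  simp only [hFG, sum_const, card_univ, Fintype.card_embedding_eq, Fintype.card_coe]

theorem prod_eq_prod_parts {M : Type*} [CommMonoid M] (P : Finpartition (univ : Finset α))
    (f : α → M) : ∏ x, f x = ∏ B ∈ P.parts, ∏ x ∈ B, f x := by
  simpa only [P.biUnion_parts, id] using prod_biUnion (f := f) P.supIndep.pairwiseDisjoint

end Finpartition

section Probability

variable {Ω ι α β : Type*} [MeasurableSpace Ω] {μ : Measure Ω}

theorem MeasureTheory.integrable_finset_prod_of_integrable_pow [IsFiniteMeasure μ] (s : Finset ι)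
    {f : ι → Ω → ℝ} (hf : ∀ t ∈ s, AEStronglyMeasurable (f t) μ)
    (hmom : ∀ t ∈ s, Integrable (fun ω => |f t ω| ^ #s) μ) :
    Integrable (fun ω => ∏ t ∈ s, f t ω) μ := by
  rcases s.eq_empty_or_nonempty with rfl | hs
  · simp
  have hcard : (#s : ENNReal) ≠ 0 := by simpa using hs.ne_empty
  have hLp : ∀ t ∈ s, MemLp (f t) (#s) μ := fun t ht => by
    rw [← integrable_norm_rpow_iff (hf t ht) hcard (ENNReal.natCast_ne_top _)]
    simpa using hmom t ht
  have := MemLp.prod' hLp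
  rwa [sum_const, nsmul_eq_mul, ENNReal.mul_inv_cancel hcard (ENNReal.natCast_ne_top _), inv_one,
    memLp_one_iff_integrable] at this

theorem ProbabilityTheory.iIndepFun.integral_prod_coloring [MeasurableSpace β] [Fintype α]
    [DecidableEq α] {X : ι → Ω → β} (hX : iIndepFun X μ) {j₀ : ι}
    (hid : ∀ j, IdentDistrib (X j) (X j₀) μ μ) (P : Finpartition (univ : Finset α))
    (g : P.parts ↪ ι) {f : α → β → ℝ} (hf : ∀ x, Measurable (f x)) :
    ∫ ω, ∏ x, f x (X (P.coloring g x) ω) ∂μ = ∏ B ∈ P.parts, ∫ ω, ∏ x ∈ B, f x (X j₀ ω) ∂μ := by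
  have hfB : ∀ B : Finset α, Measurable fun v => ∏ x ∈ B, f x v :=
    fun B => Finset.measurable_prod B fun x _ => hf x
  calc ∫ ω, ∏ x, f x (X (P.coloring g x) ω) ∂μ
      = ∫ ω, ∏ B : P.parts, ∏ x ∈ B.1, f x (X (g B) ω) ∂μ := by
        congr 1 with ω
        rw [P.prod_eq_prod_parts, ← prod_coe_sort]
        refine prod_congr rfl fun B _ => prod_congr rfl fun x hx => ?_
        simp only [Finpartition.coloring, P.part_eq_of_mem B.2 hx]
    _ = ∏ B : P.parts, ∫ ω, ∏ x ∈ B.1, f x (X (g B) ω) ∂μ :=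
        (hX.precomp g.injective).integral_fun_prod_comp (fun B => (hid (g B)).aemeasurable_fst)
          fun B => (hfB B).aestronglyMeasurable
    _ = ∏ B ∈ P.parts, ∫ ω, ∏ x ∈ B, f x (X j₀ ω) ∂μ := by
        rw [← prod_coe_sort P.parts]
        exact Fintype.prod_congr _ _ fun B => ((hid (g B)).comp (hfB B)).integral_eq

end Probability

theorem expected_trace_partition_expansion_general
    {Ω : Type} [MeasureSpace Ω] [IsProbabilityMeasure (volume : Measure Ω)]
    (a : ℕ → ℕ → Ω → ℝ) (hmeas : ∀ i j, Measurable (a i j))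
    (hindep : iIndepFun (m := fun _ : ℕ => (inferInstance : MeasurableSpace (ℕ → ℝ)))
      (fun j => fun ω => fun i : ℕ => a i j ω) volume)
    (hid : ∀ j : ℕ, IdentDistrib (fun ω => fun i : ℕ => a i j ω)
      (fun ω => fun i : ℕ => a i 0 ω) volume volume)
    (hmom : ∀ (p : ℕ) (i j : ℕ), Integrable (fun ω => |a i j ω| ^ p) volume)
    (mm nn : ℕ)
    (W : Ω → Matrix (Fin mm) (Fin mm) ℝ)
    (hW : ∀ ω, W ω = (nn : ℝ)⁻¹ •
      ((Matrix.of fun (i : Fin mm) (j : Fin nn) => a i.val j.val ω) *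
        Matrix.transpose (Matrix.of fun (i : Fin mm) (j : Fin nn) => a i.val j.val ω)))
    (k : ℕ) [NeZero k] :
    (mm : ℝ)⁻¹ * ∫ ω, ((W ω ^ k).trace)
      = ((mm : ℝ) * (nn : ℝ) ^ k)⁻¹ *
          ∑ P : Finpartition (Finset.univ : Finset (Fin k)),
            (nn.descFactorial P.parts.card : ℝ) *
              ∑ i : Fin k → Fin mm,
                ∏ B ∈ P.parts,
                  ∫ ω, ∏ l ∈ B, a (i l).val 0 ω * a (i (l + 1)).val 0 ω := by
  set term : (Fin k → Fin mm) → (Fin k → Fin nn) → Ω → ℝ :=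
    fun i c ω => ∏ l, a (i l) (c l) ω * a (i (l + 1)) (c l) ω
  have htrace : ∀ ω, (W ω ^ k).trace = (nn : ℝ)⁻¹ ^ k * ∑ i, ∑ c, term i c ω := fun ω => by
    rw [hW, smul_pow, Matrix.trace_smul, Matrix.trace_mul_transpose_pow_eq_sum, smul_eq_mul]
    rfl
  have hint : ∀ i c, Integrable (term i c) := fun i c => by
    have := integrable_finset_prod_of_integrable_pow (univ : Finset (Fin k × Bool))
      (f := fun q => a (if q.2 then i q.1 else i (q.1 + 1)) (c q.1))
      (fun q _ => (hmeas _ _).aestronglyMeasurable) (fun q _ => hmom _ _ _)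
    simpa [Fintype.prod_prod_type] using this
  have hfactor : ∀ i, ∑ c, ∫ ω, term i c ω = ∑ P : Finpartition (univ : Finset (Fin k)),
      nn.descFactorial #P.parts • ∏ B ∈ P.parts, ∫ ω, ∏ l ∈ B, a (i l) 0 ω * a (i (l + 1)) 0 ω :=
    fun i => by
      rw [Finpartition.sum_fun_eq_sum_descFactorial_smul (fun c => ∫ ω, term i c ω) _
        fun P g => hindep.integral_prod_coloring hid P (g.trans Fin.valEmbedding)
          (f := fun l v => v (i l) * v (i (l + 1))) fun l => by fun_prop, Fintype.card_fin]
  simp_rw [htrace, integral_const_mul, integral_finsetSum _ fun i _ =>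
    integrable_finsetSum _ fun c _ => hint i c, integral_finsetSum _ fun c _ => hint _ c,
    hfactor, sum_comm (γ := Fin k → Fin mm), mul_sum, nsmul_eq_mul, mul_inv, inv_pow]
  refine sum_congr rfl fun P _ => sum_congr rfl fun i _ => by ring

/-- **Expansion of the expected trace over partitions (independence of the columns).**
Let `{a(i,j) : i ∈ ℕ}`, `j ∈ ℕ`, be independent, identically distributed copies of a
real-valued stationary sequence with finite moments of all orders, let
`X_n = (a(i,j))_{1≤i≤m,1≤j≤n}` and `W_n = (1/n)·X_n·X_nᵀ`. Then for every `k ≥ 1`,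
`(1/m)·E[tr(W_n^k)] = (1/(m·n^k)) Σ_{π ∈ P(k)} n·(n-1)⋯(n-#π+1)
  Σ_{i_1,…,i_k=1}^{m} ∏_{s=1}^{#π} E[∏_{l ∈ B_π^{(s)}} a(i_l,1)·a(i_{l+1},1)]`,
where `P(k)` is the set of all partitions of `{1,…,k}` and `i_{k+1}` is identified with
`i_1` (the index `l+1` is taken cyclically). -/
theorem expected_trace_partition_expansion
    {Ω : Type} [MeasureSpace Ω] [IsProbabilityMeasure (volume : Measure Ω)]
    (a : ℕ → ℕ → Ω → ℝ) (hmeas : ∀ i j, Measurable (a i j))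
    (hindep : iIndepFun (m := fun _ : ℕ => (inferInstance : MeasurableSpace (ℕ → ℝ)))
      (fun j => fun ω => fun i : ℕ => a i j ω) volume)
    (hid : ∀ j : ℕ, IdentDistrib (fun ω => fun i : ℕ => a i j ω)
      (fun ω => fun i : ℕ => a i 0 ω) volume volume)
    (hstat : ∀ h : ℕ, IdentDistrib (fun ω => fun i : ℕ => a (i + h) 0 ω)
      (fun ω => fun i : ℕ => a i 0 ω) volume volume)
    (hmom : ∀ (p : ℕ) (i j : ℕ), Integrable (fun ω => |a i j ω| ^ p) volume)
    (mm nn : ℕ) (hmm : 0 < mm) (hnn : 0 < nn)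
    (W : Ω → Matrix (Fin mm) (Fin mm) ℝ)
    (hW : ∀ ω, W ω = (nn : ℝ)⁻¹ •
      ((Matrix.of fun (i : Fin mm) (j : Fin nn) => a i.val j.val ω) *
        Matrix.transpose (Matrix.of fun (i : Fin mm) (j : Fin nn) => a i.val j.val ω)))
    (k : ℕ) [NeZero k] :
    (mm : ℝ)⁻¹ * ∫ ω, ((W ω ^ k).trace)
      = ((mm : ℝ) * (nn : ℝ) ^ k)⁻¹ *
          ∑ P : Finpartition (Finset.univ : Finset (Fin k)),
            (nn.descFactorial P.parts.card : ℝ) *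
              ∑ i : Fin k → Fin mm,
                ∏ B ∈ P.parts,
                  ∫ ω, ∏ l ∈ B, a (i l).val 0 ω * a (i (l + 1)).val 0 ω :=
  expected_trace_partition_expansion_general a hmeas hindep hid hmom mm nn W hW k
end

section
/- Let R: ℕ₀ → ℝ satisfy |R(j)| ≤ C·α^{j} for some C>0 and α∈[0,1), extend R to ℤ by R(−j):=R(j), let T_m = (R(|i−i'|))_{1≤i,i'≤m} be the associated symmetric Toeplitz matrices, and let f:[0,1]→ℝ be the (well-defined, continuous, real-valued) spectral density f(x) = Σ_{j∈ℤ} e^{2πi j x} R(j). Then for every k∈ℕ, lim_{m→∞} (1/m)·tr(T_m^k) = ∫_0^1 f(x)^k dx. -/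
/-! Write `r j = R |j|`. Expanding `f ^ k` as a `k`-fold product of Fourier series and
integrating termwise, `∫₀¹ f ^ k` is the sum of `r v₀ ⋯ r v_{k-1}` over all increment vectors
`v ∈ ℤᵏ` with `∑ vₗ = 0`. Expanding `(T_m ^ k)ᵢᵢ` over closed walks `i → i` of length `k`
gives the same sum restricted to those `v` whose partial sums keep `i + ⋯` inside
`{0, …, m - 1}`. A walk that leaves this window has `∑ |vₗ| ≥ min (i + 1) (m - i)`, so the
two differ by at most the tail masses at `i + 1` and `m - i` of the absolutely summable family
`∏ |r vₗ|`. These tails tend to `0`, and averaging over `i` is a Cesàro mean. -/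

open Filter Topology Complex

theorem Fin.partialSum_eq_sum {M : Type*} [AddCommMonoid M] {k : ℕ} (v : Fin k → M)
    (t : Fin (k + 1)) : Fin.partialSum v t = ∑ l with l.val < t.val, v l :=
  List.sum_take_ofFn v t

theorem Fin.partialSum_last {M : Type*} [AddCommMonoid M] {k : ℕ} (v : Fin k → M) :
    Fin.partialSum v (Fin.last k) = ∑ l, v l := by
  rw [Fin.partialSum_eq_sum]
  exact Finset.sum_congr (Finset.filter_true_of_mem fun l _ => l.isLt) fun _ _ => rfl

theorem Fin.natAbs_partialSum_le {k : ℕ} (v : Fin k → ℤ) (t : Fin (k + 1)) :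
    (Fin.partialSum v t).natAbs ≤ ∑ l, (v l).natAbs := by
  rw [Fin.partialSum_eq_sum]
  exact (Int.natAbs_sum_le _ _).trans (Finset.sum_le_sum_of_subset (Finset.filter_subset _ _))

theorem Matrix.pow_apply_eq_sum_cons {n α : Type*} [Fintype n] [DecidableEq n]
    [CommSemiring α] (A : Matrix n n α) (k : ℕ) (i j : n) :
    (A ^ k) i j = ∑ w : Fin k → n, if (Fin.cons i w : Fin (k + 1) → n) (Fin.last k) = j then
      ∏ l : Fin k, A ((Fin.cons i w : Fin (k + 1) → n) l.castSucc)
        ((Fin.cons i w : Fin (k + 1) → n) l.succ) else 0 := by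
  induction k generalizing i with
  | zero => simp [Matrix.one_apply]
  | succ k ih =>
    rw [pow_succ', Matrix.mul_apply, ← (Fin.consEquiv fun _ => n).sum_comp,
      Fintype.sum_prod_type]
    refine Finset.sum_congr rfl fun x _ => ?_
    rw [ih, Finset.mul_sum]
    refine Finset.sum_congr rfl fun w _ => ?_
    simp [Fin.consEquiv, Fin.prod_univ_succ, ← Fin.succ_last, mul_ite]

theorem toeplitz_pow_apply {R : Type*} [CommSemiring R] [TopologicalSpace R] {m : ℕ}
    {r : ℤ → R} {T : Matrix (Fin m) (Fin m) R} (hT : ∀ i j : Fin m, T i j = r ((j : ℤ) - i)) (k : ℕ)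
    (i j : Fin m) :
    (T ^ k) i j = ∑' v : Fin k → ℤ,
      if (i : ℤ) + ∑ l, v l = j ∧ ∀ t, 0 ≤ (i : ℤ) + Fin.partialSum v t ∧
        (i : ℤ) + Fin.partialSum v t < m then ∏ l, r (v l) else 0 := by
  set pos : (Fin k → Fin m) → Fin (k + 1) → ℤ :=
    fun w t => ((Fin.cons i w : Fin (k + 1) → Fin m) t : ℤ)
  -- Walks are parametrised by their increments: `inc` is injective, with image the increment
  -- vectors whose partial sums keep `i + ⋯` in the window.
  set inc : (Fin k → Fin m) → Fin k → ℤ := fun w l => -pos w l.castSucc + pos w l.succ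
  have hpos (w : Fin k → Fin m) (t : Fin (k + 1)) :
      (i : ℤ) + Fin.partialSum (inc w) t = pos w t :=
    congrFun (Fin.partialSum_left_neg (pos w)) t
  have hinj : Function.Injective inc := by
    intro w w' h
    funext l
    have := hpos w l.succ
    rw [h, hpos w' l.succ] at this
    simpa [pos, Fin.ext_iff] using this.symm
  rw [Matrix.pow_apply_eq_sum_cons, ← tsum_fintype (L := .unconditional _), ← hinj.tsum_eq]
  · refine tsum_congr fun w => ?_
    have hwalk (t : Fin (k + 1)) :
        0 ≤ (i : ℤ) + Fin.partialSum (inc w) t ∧ (i : ℤ) + Fin.partialSum (inc w) t < m := by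
      rw [hpos]
      simp [pos]
    have hend :
        (i : ℤ) + ∑ l, inc w l = j ↔ (Fin.cons i w : Fin (k + 1) → Fin m) (Fin.last k) = j := by
      rw [← Fin.partialSum_last, hpos, Fin.ext_iff]
      simp [pos]
    simp only [hwalk, hend, implies_true, and_true]
    refine if_congr Iff.rfl (Finset.prod_congr rfl fun l _ => ?_) rfl
    rw [hT]
    exact congrArg r (neg_add_eq_sub _ _).symm
  · intro v hv
    obtain ⟨-, hwalk⟩ := (ite_ne_right_iff.1 hv).1
    let w : Fin k → Fin m := fun l =>
      ⟨((i : ℤ) + Fin.partialSum v l.succ).toNat, by have := hwalk l.succ; omega⟩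
    have hposw (t : Fin (k + 1)) : pos w t = (i : ℤ) + Fin.partialSum v t := by
      cases t using Fin.cases with
      | zero => simp [pos]
      | succ l =>
        have := hwalk l.succ
        simp only [Fin.cons_succ, pos, w]
        omega
    refine ⟨w, funext fun l => ?_⟩
    simp only [inc, hposw, Fin.partialSum_succ]
    ring

theorem summable_prod_comp_of_nonneg {ι : Type*} {f : ι → ℝ} (hf : Summable f) (h0 : 0 ≤ f)
    (k : ℕ) : Summable fun v : Fin k → ι => ∏ l, f (v l) := by
  induction k with
  | zero => exact .of_finite
  | succ k ih =>
    rw [← (Fin.consEquiv fun _ => ι).summable_iff]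
    simpa [Function.comp_def, Fin.consEquiv, Fin.prod_univ_succ] using
      hf.mul_of_nonneg ih h0 fun v => Finset.prod_nonneg fun l _ => h0 _

theorem summable_norm_prod_comp {ι R : Type*} [NormedCommRing R] [NormOneClass R] {a : ι → R}
    (ha : Summable (‖a ·‖)) (k : ℕ) : Summable fun v : Fin k → ι => ‖∏ l, a (v l)‖ :=
  (summable_prod_comp_of_nonneg ha (fun _ => norm_nonneg _) k).of_nonneg_of_le
    (fun _ => norm_nonneg _) fun _ => Finset.norm_prod_le _ _

theorem tsum_pow_eq_tsum_prod {ι R : Type*} [NormedCommRing R] [NormOneClass R]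
    [CompleteSpace R] {a : ι → R} (ha : Summable (‖a ·‖)) (k : ℕ) :
    (∑' i, a i) ^ k = ∑' v : Fin k → ι, ∏ l, a (v l) := by
  induction k with
  | zero => simp
  | succ k ih =>
    rw [pow_succ', ih, tsum_mul_tsum_of_summable_norm ha (summable_norm_prod_comp ha k),
      ← (Fin.consEquiv fun _ => ι).tsum_eq]
    simp [Fin.consEquiv, Fin.prod_univ_succ]

theorem integral_exp_two_pi_I_int_mul (n : ℤ) :
    ∫ x in (0 : ℝ)..1, exp (2 * Real.pi * I * n * x) = if n = 0 then 1 else 0 := by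
  split_ifs with hn
  · simp [hn]
  · have hc : 2 * Real.pi * I * n ≠ 0 := by simp [Real.pi_ne_zero, hn]
    have hper : exp (2 * Real.pi * I * n) = 1 := by
      rw [show 2 * Real.pi * I * n = n * (2 * Real.pi * I) by ring]
      exact exp_int_mul_two_pi_mul_I n
    simpa [hper] using integral_exp_mul_complex (a := 0) (b := 1) hc

theorem norm_exp_two_pi_I_int_mul (n : ℤ) (x : ℝ) : ‖exp (2 * Real.pi * I * n * x)‖ = 1 := by
  rw [show 2 * Real.pi * I * n * x = ((2 * Real.pi * n * x : ℝ) : ℂ) * I by push_cast; ring,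
    norm_exp_ofReal_mul_I]

theorem tsum_exp_mul_pow {a : ℤ → ℂ} (ha : Summable (‖a ·‖)) (k : ℕ) (x : ℝ) :
    (∑' j : ℤ, exp (2 * Real.pi * I * j * x) * a j) ^ k =
      ∑' v : Fin k → ℤ, exp (2 * Real.pi * I * (∑ l, v l : ℤ) * x) * ∏ l, a (v l) := by
  rw [tsum_pow_eq_tsum_prod (by simpa [norm_exp_two_pi_I_int_mul] using ha)]
  refine tsum_congr fun v => ?_
  rw [Finset.prod_mul_distrib, ← exp_sum]
  push_cast
  rw [Finset.mul_sum, Finset.sum_mul]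

theorem integral_tsum_exp_mul_pow {a : ℤ → ℂ} (ha : Summable (‖a ·‖)) (k : ℕ) :
    ∫ x in (0 : ℝ)..1, (∑' j : ℤ, exp (2 * Real.pi * I * j * x) * a j) ^ k =
      ∑' v : Fin k → ℤ, if ∑ l, v l = 0 then ∏ l, a (v l) else 0 := by
  set F : (Fin k → ℤ) → ℝ → ℂ :=
    fun v x => exp (2 * Real.pi * I * (∑ l, v l : ℤ) * x) * ∏ l, a (v l)
  have hsum := summable_norm_prod_comp ha k
  have hnorm (v : Fin k → ℤ) (x : ℝ) : ‖F v x‖ = ‖∏ l, a (v l)‖ := by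
    rw [norm_mul, norm_exp_two_pi_I_int_mul, one_mul]
  have hlim (x : ℝ) : HasSum (F · x) ((∑' j : ℤ, exp (2 * Real.pi * I * j * x) * a j) ^ k) := by
    rw [tsum_exp_mul_pow ha]
    exact (hsum.of_norm_bounded fun v => (hnorm v x).le).hasSum
  have hint (v : Fin k → ℤ) :
      ∫ x in (0 : ℝ)..1, F v x = if ∑ l, v l = 0 then ∏ l, a (v l) else 0 := by
    rw [intervalIntegral.integral_mul_const, integral_exp_two_pi_I_int_mul]
    split_ifs <;> simp
  have := intervalIntegral.hasSum_integral_of_dominated_convergence (μ := MeasureTheory.volume)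
    (a := 0) (b := 1) (F := F) (f := fun x => (∑' j : ℤ, exp (2 * Real.pi * I * j * x) * a j) ^ k)
    (fun v _ => ‖∏ l, a (v l)‖)
    (fun v => (by fun_prop : Continuous (F v)).aestronglyMeasurable)
    (fun v => .of_forall fun x _ => (hnorm v x).le) (.of_forall fun _ _ => hsum)
    intervalIntegrable_const (.of_forall fun x _ => hlim x)
  simp only [hint] at this
  exact this.tsum_eq.symm

theorem integral_pow_eq_tsum_of_fourier {r : ℤ → ℝ} (hr : Summable r) {f : ℝ → ℝ}
    (hf : ∀ x : ℝ, (f x : ℂ) = ∑' j : ℤ, exp (2 * Real.pi * I * j * x) * (r j : ℂ)) (k : ℕ) :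
    ∫ x in (0 : ℝ)..1, f x ^ k = ∑' v : Fin k → ℤ, if ∑ l, v l = 0 then ∏ l, r (v l) else 0 := by
  have h := integral_tsum_exp_mul_pow (a := fun j => (r j : ℂ)) (by simpa using hr.abs) k
  simp only [← hf] at h
  apply Complex.ofReal_injective
  rw [← intervalIntegral.integral_ofReal, Complex.ofReal_tsum]
  push_cast
  refine h.trans (tsum_congr fun v => ?_)
  split_ifs <;> simp

noncomputable def tailMass (r : ℤ → ℝ) (k t : ℕ) : ℝ :=
  ∑' v : Fin k → ℤ, if t ≤ ∑ l, (v l).natAbs then ∏ l, |r (v l)| else 0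

theorem summable_prod_abs_comp {r : ℤ → ℝ} (hr : Summable r) (k : ℕ) :
    Summable fun v : Fin k → ℤ => ∏ l, |r (v l)| :=
  summable_prod_comp_of_nonneg hr.abs (fun _ => abs_nonneg _) k

theorem summable_ite_prod_comp {r : ℤ → ℝ} (hr : Summable r) (k : ℕ)
    (p : (Fin k → ℤ) → Prop) [DecidablePred p] :
    Summable fun v : Fin k → ℤ => if p v then ∏ l, r (v l) else 0 :=
  (summable_prod_abs_comp hr k).of_norm_bounded fun v => by
    split_ifs <;> simp [Finset.prod_nonneg]

theorem summable_ite_prod_abs_comp {r : ℤ → ℝ} (hr : Summable r) (k : ℕ)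
    (p : (Fin k → ℤ) → Prop) [DecidablePred p] :
    Summable fun v : Fin k → ℤ => if p v then ∏ l, |r (v l)| else 0 := by
  simpa using summable_ite_prod_comp hr.abs k p

theorem tendsto_tailMass_atTop {r : ℤ → ℝ} (hr : Summable r) (k : ℕ) :
    Tendsto (tailMass r k) atTop (𝓝 0) := by
  have := tendsto_tsum_of_dominated_convergence (𝓕 := atTop) (g := fun _ => (0 : ℝ))
    (f := fun (t : ℕ) (v : Fin k → ℤ) => if t ≤ ∑ l, (v l).natAbs then ∏ l, |r (v l)| else 0)
    (summable_prod_abs_comp hr k)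
    (fun v => tendsto_const_nhds.congr' <| eventually_atTop.2
      ⟨∑ l, (v l).natAbs + 1, fun t ht => (if_neg (by omega)).symm⟩)
    (.of_forall fun t v => by split_ifs <;> simp [Finset.prod_nonneg])
  rwa [tsum_zero] at this

theorem abs_toeplitz_pow_apply_self_sub_le {m : ℕ} {r : ℤ → ℝ} (hr : Summable r)
    {T : Matrix (Fin m) (Fin m) ℝ} (hT : ∀ i j : Fin m, T i j = r ((j : ℤ) - i)) (k : ℕ)
    (i : Fin m) :
    |(T ^ k) i i - ∑' v : Fin k → ℤ, if ∑ l, v l = 0 then ∏ l, r (v l) else 0| ≤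
      tailMass r k (i + 1) + tailMass r k (m - i) := by
  have hpoint (v : Fin k → ℤ) :
      |(if (i : ℤ) + ∑ l, v l = i ∧ ∀ t, 0 ≤ (i : ℤ) + Fin.partialSum v t ∧
          (i : ℤ) + Fin.partialSum v t < m then ∏ l, r (v l) else 0) -
        (if ∑ l, v l = 0 then ∏ l, r (v l) else 0)| ≤
      (if i + 1 ≤ ∑ l, (v l).natAbs then ∏ l, |r (v l)| else 0) +
        (if m - i ≤ ∑ l, (v l).natAbs then ∏ l, |r (v l)| else 0) := by
    have hnonneg (p : Prop) [Decidable p] : 0 ≤ if p then ∏ l, |r (v l)| else 0 := by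
      split_ifs <;> positivity
    by_cases hclosed : ∑ l, v l = 0
    swap
    · simpa [hclosed] using add_nonneg (hnonneg _) (hnonneg _)
    by_cases hinside :
        ∀ t, 0 ≤ (i : ℤ) + Fin.partialSum v t ∧ (i : ℤ) + Fin.partialSum v t < m
    · simpa [hclosed, hinside] using add_nonneg (hnonneg _) (hnonneg _)
    obtain ⟨t, ht⟩ := not_forall.1 hinside
    have hps := Fin.natAbs_partialSum_le v t
    rw [if_neg fun h => hinside h.2, if_pos hclosed, zero_sub, abs_neg, Finset.abs_prod]
    by_cases hbelow : (i : ℤ) + Fin.partialSum v t < 0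
    · rw [if_pos (show i + 1 ≤ ∑ l, (v l).natAbs by omega)]
      exact le_add_of_nonneg_right (hnonneg _)
    · rw [if_pos (show m - i ≤ ∑ l, (v l).natAbs by omega)]
      exact le_add_of_nonneg_left (hnonneg _)
  rw [toeplitz_pow_apply hT, ← (summable_ite_prod_comp hr k _).tsum_sub
    (summable_ite_prod_comp hr k _), tailMass, tailMass,
    ← (summable_ite_prod_abs_comp hr k _).tsum_add (summable_ite_prod_abs_comp hr k _),
    ← Real.norm_eq_abs]
  exact tsum_of_norm_bounded
    ((summable_ite_prod_abs_comp hr k _).add (summable_ite_prod_abs_comp hr k _)).hasSum hpoint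

theorem Finset.sum_range_reflect_sub {M : Type*} [AddCommMonoid M] (D : ℕ → M) (m : ℕ) :
    ∑ t ∈ Finset.range m, D (m - t) = ∑ t ∈ Finset.range m, D (t + 1) := by
  rw [← Finset.sum_range_reflect]
  exact Finset.sum_congr rfl fun t ht => by rw [Finset.mem_range] at ht; congr 1; omega

theorem tendsto_inv_mul_sum_of_abs_sub_le {D : ℕ → ℝ} (hD : Tendsto D atTop (𝓝 0))
    {a : (m : ℕ) → Fin m → ℝ} {c : ℝ} (ha : ∀ m i, |a m i - c| ≤ D (i + 1) + D (m - i)) :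
    Tendsto (fun m : ℕ => (m : ℝ)⁻¹ * ∑ i, a m i) atTop (𝓝 c) := by
  have hcesaro : Tendsto (fun m : ℕ => 2 * ((m : ℝ)⁻¹ * ∑ t ∈ Finset.range m, D (t + 1)))
      atTop (𝓝 0) := by
    simpa using ((hD.comp (tendsto_add_atTop_nat 1)).cesaro).const_mul 2
  rw [← tendsto_sub_nhds_zero_iff]
  refine squeeze_zero_norm' ?_ hcesaro
  filter_upwards [eventually_ne_atTop 0] with m hm
  have hcenter : (m : ℝ)⁻¹ * ∑ i, a m i - c = (m : ℝ)⁻¹ * ∑ i, (a m i - c) := by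
    rw [Finset.sum_sub_distrib]
    field_simp
    simp
  calc ‖(m : ℝ)⁻¹ * ∑ i, a m i - c‖ = (m : ℝ)⁻¹ * |∑ i, (a m i - c)| := by
        rw [hcenter, Real.norm_eq_abs, abs_mul, abs_inv, Nat.abs_cast]
    _ ≤ (m : ℝ)⁻¹ * ∑ i : Fin m, (D (i + 1) + D (m - i)) := by
        gcongr
        exact (Finset.abs_sum_le_sum_abs _ _).trans (Finset.sum_le_sum fun i _ => ha m i)
    _ = 2 * ((m : ℝ)⁻¹ * ∑ t ∈ Finset.range m, D (t + 1)) := by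
        rw [Finset.sum_add_distrib, Fin.sum_univ_eq_sum_range (fun t => D (t + 1)),
          Fin.sum_univ_eq_sum_range (fun t => D (m - t)), Finset.sum_range_reflect_sub]
        ring

theorem szegoe_limit_trace_power_general (R : ℕ → ℝ) (C : ℝ)
    (α : ℝ) (hα0 : 0 ≤ α) (hα1 : α < 1)
    (hR : ∀ j : ℕ, |R j| ≤ C * α ^ j)
    (T : (m : ℕ) → Matrix (Fin m) (Fin m) ℝ)
    (hT : ∀ (m : ℕ) (i i' : Fin m), T m i i' = R (max i.val i'.val - min i.val i'.val))
    (f : ℝ → ℝ)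
    (hf : ∀ x : ℝ, (f x : ℂ) =
      ∑' j : ℤ, Complex.exp (2 * Real.pi * Complex.I * (j : ℂ) * (x : ℂ)) * (R j.natAbs : ℂ))
    (k : ℕ) :
    Tendsto (fun m : ℕ => (m : ℝ)⁻¹ * ((T m ^ k).trace)) atTop
      (nhds (∫ x in (0 : ℝ)..1, f x ^ k)) := by
  set r : ℤ → ℝ := fun j => R j.natAbs
  have hr : Summable r := by
    have hgeo : Summable fun n : ℕ => C * α ^ n :=
      (summable_geometric_of_lt_one hα0 hα1).mul_left C
    exact Summable.of_norm_bounded (g := fun j : ℤ => C * α ^ j.natAbs)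
      (.of_nat_of_neg (by simpa using hgeo) (by simpa using hgeo)) fun j => hR _
  have hTr (m : ℕ) (i j : Fin m) : T m i j = r ((j : ℤ) - i) := by
    rw [hT]
    simp only [r]
    congr 1
    omega
  rw [integral_pow_eq_tsum_of_fourier hr hf k]
  exact tendsto_inv_mul_sum_of_abs_sub_le (tendsto_tailMass_atTop hr k) fun m i =>
    abs_toeplitz_pow_apply_self_sub_le hr (hTr m) k i

/-- **Szegő-type limit theorem for exponentially decaying covariances.** Let `R : ℕ₀ → ℝ`
satisfy `|R(j)| ≤ C·α^j` with `C > 0`, `α ∈ [0,1)`, extended to `ℤ` by `R(-j) = R(j)`; let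
`T_m = (R(|i-i'|))_{1≤i,i'≤m}` be the associated symmetric Toeplitz matrices and let
`f : [0,1] → ℝ` be the real-valued spectral density `f(x) = Σ_{j∈ℤ} e^{2πijx} R(j)`.
Then for every `k ≥ 1`, `lim_{m→∞} (1/m)·tr(T_m^k) = ∫_0^1 f(x)^k dx`. -/
theorem szegoe_limit_trace_power (R : ℕ → ℝ) (C : ℝ) (hC : 0 < C)
    (α : ℝ) (hα0 : 0 ≤ α) (hα1 : α < 1)
    (hR : ∀ j : ℕ, |R j| ≤ C * α ^ j)
    (T : (m : ℕ) → Matrix (Fin m) (Fin m) ℝ)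
    (hT : ∀ (m : ℕ) (i i' : Fin m), T m i i' = R (max i.val i'.val - min i.val i'.val))
    (f : ℝ → ℝ)
    (hf : ∀ x : ℝ, (f x : ℂ) =
      ∑' j : ℤ, Complex.exp (2 * Real.pi * Complex.I * (j : ℂ) * (x : ℂ)) * (R j.natAbs : ℂ))
    (k : ℕ) (hk : 1 ≤ k) :
    Tendsto (fun m : ℕ => (m : ℝ)⁻¹ * ((T m ^ k).trace)) atTop
      (nhds (∫ x in (0 : ℝ)..1, f x ^ k)) :=
  szegoe_limit_trace_power_general R C α hα0 hα1 hR T hT f hf k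
end
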